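/- arXiv:2305.13461 — 3 statements merged into one kernel-verified Lean document; each statement's English description precedes it below -/
import Mathlib

section
/- Let $t$ be a positive integer and let $\Omega \subseteq \mathbb{C}$ be an open neighborhood of the origin. Then there is no function $f$ analytic on $\Omega$, not agreeing on any neighborhood of $0$ with a quotient of two polynomials with complex coefficients, whose Taylor coefficients $a_k$ at $0$ are rational for all $0 \le k \le t$, which maps $\mathbb{Q} \cap \Omega$ into $\mathbb{Q}$, and for which there exists a constant $C > 0$ and an integer $q_0$ such that $\operatorname{den} f(p/q) \le C\, q^{t/2}$ for all rational numbers $p/q \in \Omega$ in lowest terms with $q \ge q_0$. -/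
/-!
Since the Taylor polynomial of `f` of order `t` has rational coefficients, it has a Padé
approximant: polynomials `P, Q` with rational coefficients, of degree at most `L = ⌈t/2⌉`,
`Q ≠ 0`, such that `A = P + Q f` vanishes to order `t + 1` at `0`. At `z = 1/q` the
value `A(1/q)` is rational with denominator dividing `D · den f(1/q) · q^L ≪ q^(t/2 + L)`, while
`|A(1/q)| ≪ q^(-(t+1))`. Since `t/2 + L < t + 1`, the integer `A(1/q) · D · den f(1/q) · q^L`
tends to `0`, so `A(1/q) = 0` for all large `q`. By the identity theorem `P + Q f = 0` near `0`,
and cancelling common powers of `z` exhibits `f` as a rational function near `0`.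
-/

open Polynomial Filter Asymptotics Finset
open scoped Topology Nat

section Taylor

variable {𝕜 : Type*} [NontriviallyNormedField 𝕜]

noncomputable def taylorPolyAtZero (f : 𝕜 → 𝕜) (n : ℕ) : 𝕜[X] :=
  ∑ k ∈ range (n + 1), C (iteratedDeriv k f 0 / k !) * X ^ k

theorem coeff_taylorPolyAtZero (f : 𝕜 → 𝕜) (n k : ℕ) :
    (taylorPolyAtZero f n).coeff k = if k ≤ n then iteratedDeriv k f 0 / k ! else 0 := by
  simp [taylorPolyAtZero]

theorem AnalyticAt.isBigO_sub_eval_taylorPolyAtZero [CompleteSpace 𝕜] [CharZero 𝕜] {f : 𝕜 → 𝕜}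
    (hf : AnalyticAt 𝕜 f 0) (n : ℕ) :
    (fun z => f z - (taylorPolyAtZero f n).eval z) =O[𝓝 0] fun z => ‖z‖ ^ (n + 1) := by
  refine (hf.hasFPowerSeriesAt.isBigO_sub_partialSum_pow (n + 1)).congr_left fun z => ?_
  simp only [zero_add, taylorPolyAtZero, eval_finsetSum, eval_mul, eval_C, eval_pow, eval_X,
    FormalMultilinearSeries.partialSum, FormalMultilinearSeries.ofScalars_apply_eq, smul_eq_mul]

theorem exists_map_algebraMap_eq_taylorPolyAtZero [CharZero 𝕜] {f : 𝕜 → 𝕜} {n : ℕ}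
    (h : ∀ k ≤ n, ∃ a : ℚ, iteratedDeriv k f 0 = a * k !) :
    ∃ T : ℚ[X], T.map (algebraMap ℚ 𝕜) = taylorPolyAtZero f n := by
  refine (lifts_iff_coeff_lifts _).2 fun k => ?_
  rw [coeff_taylorPolyAtZero]
  split_ifs with hk
  · obtain ⟨a, ha⟩ := h k hk
    exact ⟨a, by
      rw [ha, eq_ratCast, mul_div_cancel_right₀ _ (Nat.cast_ne_zero.2 k.factorial_ne_zero)]⟩
  · exact ⟨0, map_zero _⟩

end Taylor

theorem exists_padeApproximant {K : Type*} [Field K] (T : K[X]) {m n N : ℕ} (hN : N ≤ m + n + 1)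
    (hm : m < N) :
    ∃ P Q : K[X], P.natDegree ≤ m ∧ Q.natDegree ≤ n ∧ Q ≠ 0 ∧ X ^ N ∣ P + Q * T := by
  let Φ : degreeLT K (m + 1) × degreeLT K (n + 1) →ₗ[K] Fin N → K :=
    LinearMap.pi fun k => lcoeff K k ∘ₗ (degreeLT K (m + 1)).subtype.coprod
      (LinearMap.mulRight K T ∘ₗ (degreeLT K (n + 1)).subtype)
  have hker : LinearMap.ker Φ ≠ ⊥ := LinearMap.ker_ne_bot_of_finrank_lt <| by
    simp only [Module.finrank_prod, (degreeLTEquiv K _).finrank_eq, Module.finrank_fin_fun]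
    omega
  obtain ⟨⟨⟨P, hP⟩, ⟨Q, hQ⟩⟩, hΦ, hne⟩ := (Submodule.ne_bot_iff _).1 hker
  have hdvd : X ^ N ∣ P + Q * T := X_pow_dvd_iff.2 fun k hk => congr_fun hΦ ⟨k, hk⟩
  rw [degreeLT_succ_eq_degreeLE, mem_degreeLE, ← natDegree_le_iff_degree_le] at hP hQ
  refine ⟨P, Q, hP, hQ, ?_, hdvd⟩
  rintro rfl
  rw [zero_mul, add_zero] at hdvd
  have hP0 : P = 0 := eq_zero_of_dvd_of_natDegree_lt hdvd (by rw [natDegree_X_pow]; omega)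
  exact hne (by simp [hP0])

theorem exists_natCast_mul_pow_mul_eval_inv_mem_bot (P : ℚ[X]) {L : ℕ} (hP : P.natDegree ≤ L) :
    ∃ D : ℕ, 0 < D ∧ ∀ q : ℕ, q ≠ 0 →
      (D * q ^ L * P.eval (q : ℚ)⁻¹ : ℚ) ∈ (⊥ : Subring ℚ) := by
  set D := ∏ j ∈ range (L + 1), (P.coeff j).den
  refine ⟨D, prod_pos fun j _ => (P.coeff j).pos, fun q hq => ?_⟩
  rw [eval_eq_sum_range' (Nat.lt_succ_of_le hP), mul_sum]
  refine Subring.sum_mem _ fun j hj => ?_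
  obtain ⟨e, he⟩ : (P.coeff j).den ∣ D := dvd_prod_of_mem _ hj
  have hq' : (q : ℚ) ≠ 0 := Nat.cast_ne_zero.2 hq
  have hterm : (D : ℚ) * q ^ L * (P.coeff j * (q : ℚ)⁻¹ ^ j)
      = (e * (P.coeff j).num : ℤ) * (q : ℚ) ^ (L - j) := by
    rw [he, pow_sub₀ _ hq' (Nat.lt_succ_iff.1 (mem_range.1 hj)), inv_pow]
    push_cast
    rw [← Rat.den_mul_eq_num]
    ring
  rw [hterm]
  exact mul_mem (intCast_mem _ _) (pow_mem (natCast_mem _ _) _)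

theorem eventually_eq_zero_of_tendsto_natCast_mul {ι : Type*} {l : Filter ι} {x : ι → ℚ}
    {M : ι → ℕ} (hM : ∀ᶠ i in l, M i ≠ 0) (hint : ∀ᶠ i in l, (M i * x i : ℚ) ∈ (⊥ : Subring ℚ))
    (h : Tendsto (fun i => (M i * x i : ℝ)) l (𝓝 0)) : ∀ᶠ i in l, x i = 0 := by
  filter_upwards [hM, hint, h.eventually (Metric.ball_mem_nhds 0 one_pos)] with i hMi hi hlt
  obtain ⟨z, hz⟩ := Subring.mem_bot.1 hi
  rw [dist_zero_right, Real.norm_eq_abs] at hlt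
  have hzR : (z : ℝ) = M i * x i := by exact_mod_cast hz
  have hz0 : z = 0 := Int.abs_lt_one_iff.1 (by rw [← hzR] at hlt; exact_mod_cast hlt)
  simpa [hz0, hMi, eq_comm] using hz

theorem tendsto_natCast_rpow_mul_pow_mul_inv_pow {a : ℝ} {b c : ℕ} (h : a + b < c) :
    Tendsto (fun q : ℕ => (q : ℝ) ^ a * (q : ℝ) ^ b * (q : ℝ)⁻¹ ^ c) atTop (𝓝 0) := by
  have hlim := (tendsto_rpow_neg_atTop (sub_pos.2 h)).comp tendsto_natCast_atTop_atTop
  refine hlim.congr' ?_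
  filter_upwards [eventually_gt_atTop 0] with q hq
  have hq' : (0 : ℝ) < q := Nat.cast_pos.2 hq
  simp only [Function.comp_apply, neg_sub, Real.rpow_sub hq', Real.rpow_add hq',
    Real.rpow_natCast, inv_pow]
  rfl

theorem eventually_eval_inv_add_eval_inv_mul_eq_zero {P Q : ℚ[X]} {L t : ℕ} {C : ℝ} {s : ℕ → ℚ}
    (hP : P.natDegree ≤ L) (hQ : Q.natDegree ≤ L) (hL : 2 * L ≤ t + 1)
    (hden : ∀ᶠ q : ℕ in atTop, ((s q).den : ℝ) ≤ C * (q : ℝ) ^ ((t : ℝ) / 2))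
    (hsmall : (fun q : ℕ => ((P.eval (q : ℚ)⁻¹ + Q.eval (q : ℚ)⁻¹ * s q : ℚ) : ℝ))
      =O[atTop] fun q => (q : ℝ)⁻¹ ^ (t + 1)) :
    ∀ᶠ q : ℕ in atTop, P.eval (q : ℚ)⁻¹ + Q.eval (q : ℚ)⁻¹ * s q = 0 := by
  obtain ⟨DP, hDP, hPint⟩ := exists_natCast_mul_pow_mul_eval_inv_mem_bot P hP
  obtain ⟨DQ, hDQ, hQint⟩ := exists_natCast_mul_pow_mul_eval_inv_mem_bot Q hQ
  have hq0 : ∀ᶠ q : ℕ in atTop, q ≠ 0 := eventually_ne_atTop 0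
  refine eventually_eq_zero_of_tendsto_natCast_mul
    (M := fun q => DP * DQ * (s q).den * q ^ L) ?_ ?_ ?_
  · filter_upwards [hq0] with q hq
    positivity
  · filter_upwards [hq0] with q hq
    have hsplit : ((DP * DQ * (s q).den * q ^ L : ℕ) : ℚ)
          * (P.eval (q : ℚ)⁻¹ + Q.eval (q : ℚ)⁻¹ * s q)
        = DQ * (s q).den * (DP * q ^ L * P.eval (q : ℚ)⁻¹)
          + DP * (s q).num * (DQ * q ^ L * Q.eval (q : ℚ)⁻¹) := by
      rw [← Rat.den_mul_eq_num]
      push_cast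
      ring
    rw [hsplit]
    exact add_mem (mul_mem (mul_mem (natCast_mem _ _) (natCast_mem _ _)) (hPint q hq))
      (mul_mem (mul_mem (natCast_mem _ _) (intCast_mem _ _)) (hQint q hq))
  · have hM : (fun q : ℕ => ((DP * DQ * (s q).den * q ^ L : ℕ) : ℝ))
        =O[atTop] fun q : ℕ => (q : ℝ) ^ ((t : ℝ) / 2) * (q : ℝ) ^ L := by
      refine IsBigO.of_bound (DP * DQ * C) ?_
      filter_upwards [hden] with q hq
      have : (0 : ℝ) ≤ (q : ℝ) ^ ((t : ℝ) / 2) := by positivity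
      simp only [Nat.cast_mul, Nat.cast_pow, Real.norm_eq_abs, abs_mul, abs_pow, Nat.abs_cast,
        abs_of_nonneg this]
      have : (0 : ℝ) ≤ DP * DQ := by positivity
      calc (DP : ℝ) * DQ * (s q).den * (q : ℝ) ^ L
          ≤ DP * DQ * (C * (q : ℝ) ^ ((t : ℝ) / 2)) * (q : ℝ) ^ L := by gcongr
        _ = DP * DQ * C * ((q : ℝ) ^ ((t : ℝ) / 2) * (q : ℝ) ^ L) := by ring
    refine (hM.mul hsmall).trans_tendsto (tendsto_natCast_rpow_mul_pow_mul_inv_pow ?_)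
    push_cast
    linarith [show (2 * L : ℝ) ≤ t + 1 by exact_mod_cast hL]

theorem isBigO_eval_add_eval_mul {𝕜 : Type*} [NormedField 𝕜] {f : 𝕜 → 𝕜} {P Q T : 𝕜[X]} {N : ℕ}
    (hf : (fun z => f z - T.eval z) =O[𝓝 0] fun z => ‖z‖ ^ N) (hdvd : X ^ N ∣ P + Q * T) :
    (fun z => P.eval z + Q.eval z * f z) =O[𝓝 0] fun z => ‖z‖ ^ N := by
  obtain ⟨S, hS⟩ := hdvd
  have hsplit (z : 𝕜) :
      P.eval z + Q.eval z * f z = z ^ N * S.eval z + Q.eval z * (f z - T.eval z) := by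
    have := congr_arg (eval z) hS
    simp only [eval_add, eval_mul, eval_pow, eval_X] at this
    linear_combination this
  have hbdd : ∀ R : 𝕜[X], (fun z => R.eval z) =O[𝓝 (0 : 𝕜)] fun _ => (1 : ℝ) :=
    fun R => (R.continuous.tendsto 0).isBigO_one ℝ
  simp only [hsplit]
  refine IsBigO.add ?_ ?_
  · simpa using (isBigO_norm_right.2 (isBigO_refl (fun z : 𝕜 => z ^ N) (𝓝 0))).mul (hbdd S)
  · simpa using (hbdd Q).mul hf

theorem AnalyticAt.eventually_eq_zero_of_eventually_inv_natCast {𝕜 E : Type*} [RCLike 𝕜]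
    [NormedAddCommGroup E] [NormedSpace 𝕜 E] {f : 𝕜 → E} (hf : AnalyticAt 𝕜 f 0)
    (h : ∀ᶠ q : ℕ in atTop, f (q : 𝕜)⁻¹ = 0) : ∀ᶠ z in 𝓝 0, f z = 0 := by
  have hlim : Tendsto (fun q : ℕ => (q : 𝕜)⁻¹) atTop (𝓝[≠] 0) :=
    tendsto_nhdsWithin_iff.2 ⟨tendsto_inv_atTop_nhds_zero_nat, by
      filter_upwards [eventually_ne_atTop 0] with q hq
      simpa using hq⟩
  exact hf.frequently_zero_iff_eventually_zero.1 (hlim.frequently h.frequently)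

theorem exists_eventually_eq_div_of_eventually_eval_add_eval_mul_eq_zero {𝕜 : Type*}
    [NontriviallyNormedField 𝕜] {f : 𝕜 → 𝕜} (hf : ContinuousAt f 0) {P Q : 𝕜[X]} (hQ : Q ≠ 0)
    (h : ∀ᶠ z in 𝓝 0, P.eval z + Q.eval z * f z = 0) :
    ∃ P' Q' : 𝕜[X], Q' ≠ 0 ∧ ∀ᶠ z in 𝓝 0, f z = P'.eval z / Q'.eval z := by
  induction hn : Q.natDegree using Nat.strong_induction_on generalizing P Q with
  | _ n ih =>
  by_cases hQ0 : Q.eval 0 = 0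
  · have hP0 : P.eval 0 = 0 := by simpa [hQ0] using h.self_of_nhds
    obtain ⟨Q₁, rfl⟩ : X ∣ Q := X_dvd_iff.2 (by rwa [coeff_zero_eq_eval_zero])
    obtain ⟨P₁, rfl⟩ : X ∣ P := X_dvd_iff.2 (by rwa [coeff_zero_eq_eval_zero])
    have hQ₁ : Q₁ ≠ 0 := right_ne_zero_of_mul hQ
    refine ih _ (by rw [← hn, natDegree_X_mul hQ₁]; omega) (P := P₁) hQ₁ ?_ rfl
    -- off `0` the relation can be divided by `z`, and continuity extends it to `0`
    have hcont : ContinuousAt (fun z => P₁.eval z + Q₁.eval z * f z) 0 :=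
      P₁.continuousAt.add (Q₁.continuousAt.mul hf)
    refine (hcont.eventuallyEq_nhds_iff_eventuallyEq_nhdsNE continuousAt_const).1 ?_
    filter_upwards [eventually_nhdsWithin_of_eventually_nhds h, self_mem_nhdsWithin]
      with z hz hz0
    simp only [eval_mul, eval_X] at hz
    exact (mul_eq_zero.1 (by linear_combination hz)).resolve_left hz0
  · refine ⟨-P, Q, hQ, ?_⟩
    filter_upwards [h, Q.continuousAt.eventually_ne hQ0] with z hz hQz
    rw [eval_neg, eq_div_iff hQz]
    linear_combination hz

theorem exists_eventually_eq_ratCast_inv_natCast {f : ℂ → ℂ} {Ω : Set ℂ} (hΩ : Ω ∈ 𝓝 0)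
    (hval : ∀ r : ℚ, (r : ℂ) ∈ Ω → ∃ s : ℚ, f r = s) :
    ∃ g : ℕ → ℚ, ∀ᶠ q : ℕ in atTop, (((q : ℚ)⁻¹ : ℚ) : ℂ) ∈ Ω ∧ f (q : ℂ)⁻¹ = g q := by
  have hlim : Tendsto (fun q : ℕ => (((q : ℚ)⁻¹ : ℚ) : ℂ)) atTop (𝓝 0) := by
    simpa using tendsto_inv_atTop_nhds_zero_nat (𝕜 := ℂ)
  choose g hg using fun q : ℕ => (em ((((q : ℚ)⁻¹ : ℚ) : ℂ) ∈ Ω)).elim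
    (fun hq => (hval _ hq).imp fun _ hs _ => hs) fun hq => ⟨0, fun h => absurd h hq⟩
  exact ⟨g, (hlim.eventually_mem hΩ).mono fun q hq => ⟨hq, by simpa using hg q hq⟩⟩

theorem isBigO_inv_natCast_pow_of_isBigO_norm_pow {A : ℂ → ℂ} {ρ : ℕ → ℚ} {N : ℕ}
    (hA : A =O[𝓝 0] fun z => ‖z‖ ^ N) (hρ : ∀ᶠ q : ℕ in atTop, A (q : ℂ)⁻¹ = ρ q) :
    (fun q => (ρ q : ℝ)) =O[atTop] fun q => (q : ℝ)⁻¹ ^ N := by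
  rw [← isBigO_norm_left]
  refine (isBigO_norm_left.2 (hA.comp_tendsto tendsto_inv_atTop_nhds_zero_nat)).congr' ?_
    (Eventually.of_forall fun q => by simp)
  filter_upwards [hρ] with q hq
  simp only [Function.comp_apply, hq, Complex.norm_ratCast, Real.norm_eq_abs]

theorem no_transcendental_with_small_denominators_half_general
    (t : ℕ) (Ω : Set ℂ) (hΩ : IsOpen Ω) (h0 : (0 : ℂ) ∈ Ω) :
    ¬ ∃ f : ℂ → ℂ,
      AnalyticOnNhd ℂ f Ω ∧
      (¬ ∃ (P Q : Polynomial ℂ), Q ≠ 0 ∧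
        ∀ᶠ z in nhds (0 : ℂ), f z = Polynomial.eval z P / Polynomial.eval z Q) ∧
      (∀ k : ℕ, k ≤ t → ∃ a : ℚ, iteratedDeriv k f 0 = (a : ℂ) * (Nat.factorial k)) ∧
      (∀ r : ℚ, (r : ℂ) ∈ Ω → ∃ s : ℚ, f (r : ℂ) = (s : ℂ)) ∧
      (∃ C : ℝ, 0 < C ∧ ∃ q₀ : ℕ, ∀ r : ℚ, (r : ℂ) ∈ Ω → q₀ ≤ r.den →
        ∀ s : ℚ, f (r : ℂ) = (s : ℂ) → (s.den : ℝ) ≤ C * (r.den : ℝ) ^ ((t : ℝ) / 2)) := by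
  rintro ⟨f, hf, hirr, hcoeff, hval, C, -, q₀, hden⟩
  have hf0 := hf 0 h0
  obtain ⟨T, hT⟩ := exists_map_algebraMap_eq_taylorPolyAtZero hcoeff
  obtain ⟨P, Q, hP, hQ, hQ0, hdvd⟩ :=
    exists_padeApproximant T (m := (t + 1) / 2) (n := (t + 1) / 2) (N := t + 1) (by omega)
      (by omega)
  set ι : ℚ[X] → ℂ[X] := map (algebraMap ℚ ℂ)
  set A : ℂ → ℂ := fun z => (ι P).eval z + (ι Q).eval z * f z
  have hA : A =O[𝓝 0] fun z => ‖z‖ ^ (t + 1) :=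
    isBigO_eval_add_eval_mul (hT ▸ hf0.isBigO_sub_eval_taylorPolyAtZero t)
      (by simpa [ι] using map_dvd (algebraMap ℚ ℂ) hdvd)
  obtain ⟨g, hg⟩ := exists_eventually_eq_ratCast_inv_natCast (hΩ.mem_nhds h0) hval
  have hAg : ∀ᶠ q : ℕ in atTop,
      A (q : ℂ)⁻¹ = ((P.eval (q : ℚ)⁻¹ + Q.eval (q : ℚ)⁻¹ * g q : ℚ) : ℂ) := by
    filter_upwards [hg] with q hq
    have hev (R : ℚ[X]) : aeval (q : ℂ)⁻¹ R = ((R.eval (q : ℚ)⁻¹ : ℚ) : ℂ) := by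
      simpa using aeval_algebraMap_apply_eq_algebraMap_eval (A := ℂ) (q : ℚ)⁻¹ R
    simp [A, ι, hq.2, eval_map_algebraMap, hev]
  have hgden : ∀ᶠ q : ℕ in atTop, ((g q).den : ℝ) ≤ C * (q : ℝ) ^ ((t : ℝ) / 2) := by
    filter_upwards [hg, eventually_ge_atTop (max q₀ 1)] with q hq hq₀
    have hqden : ((q : ℚ)⁻¹).den = q := by simp; omega
    simpa [hqden] using hden _ hq.1 (by omega) _ (by simpa using hq.2)
  have hzero := eventually_eval_inv_add_eval_inv_mul_eq_zero hP hQ (by omega) hgden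
    (isBigO_inv_natCast_pow_of_isBigO_norm_pow hA hAg)
  refine hirr (exists_eventually_eq_div_of_eventually_eval_add_eval_mul_eq_zero hf0.continuousAt
    (P := ι P) (Q := ι Q) (Polynomial.map_ne_zero hQ0) ?_)
  refine AnalyticAt.eventually_eq_zero_of_eventually_inv_natCast (f := A)
    ((analyticAt_id.aeval_polynomial (ι P)).add ((analyticAt_id.aeval_polynomial (ι Q)).mul hf0)) ?_
  filter_upwards [hAg, hzero] with q hq hq'
  simpa [hq'] using hq

/-- Let `t` be a positive integer and `Ω ⊆ ℂ` an open neighborhood of the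
origin. There is no function `f` analytic on `Ω`, not agreeing on any neighborhood of `0` with
a quotient of two complex polynomials, whose Taylor coefficients `aₖ = f⁽ᵏ⁾(0)/k!` are rational
for all `0 ≤ k ≤ t`, mapping `ℚ ∩ Ω` into `ℚ`, and such that for some `C > 0` and integer `q₀`
one has `den f(p/q) ≤ C * q^(t/2)` for all rationals `p/q ∈ Ω` in lowest terms with `q ≥ q₀`. -/
theorem no_transcendental_with_small_denominators_half
    (t : ℕ) (ht : 0 < t) (Ω : Set ℂ) (hΩ : IsOpen Ω) (h0 : (0 : ℂ) ∈ Ω) :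
    ¬ ∃ f : ℂ → ℂ,
      AnalyticOnNhd ℂ f Ω ∧
      (¬ ∃ (P Q : Polynomial ℂ), Q ≠ 0 ∧
        ∀ᶠ z in nhds (0 : ℂ), f z = Polynomial.eval z P / Polynomial.eval z Q) ∧
      (∀ k : ℕ, k ≤ t → ∃ a : ℚ, iteratedDeriv k f 0 = (a : ℂ) * (Nat.factorial k)) ∧
      (∀ r : ℚ, (r : ℂ) ∈ Ω → ∃ s : ℚ, f (r : ℂ) = (s : ℂ)) ∧
      (∃ C : ℝ, 0 < C ∧ ∃ q₀ : ℕ, ∀ r : ℚ, (r : ℂ) ∈ Ω → q₀ ≤ r.den →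
        ∀ s : ℚ, f (r : ℂ) = (s : ℂ) → (s.den : ℝ) ≤ C * (r.den : ℝ) ^ ((t : ℝ) / 2)) :=
  no_transcendental_with_small_denominators_half_general t Ω hΩ h0
end

section
/- Let $t$ be a positive integer, let $\Omega \subseteq \mathbb{C}$ be an open neighborhood of the origin, and let $f$ be analytic on $\Omega$ with Taylor coefficients $a_k$ at $0$ satisfying $a_k \in \mathbb{Q}$ for all $0 \le k \le 2t$. Suppose $f(\mathbb{Q} \cap \Omega) \subseteq \mathbb{Q}$ and there exist a constant $C > 0$ and an integer $q_0$ such that $\operatorname{den} f(p/q) \le C\, q^{t}$ for all rational numbers $p/q \in \Omega$ in lowest terms with $q \ge q_0$. Then there exist polynomials $P, Q \in \mathbb{Q}[z]$ with $\deg P \le t$, $\deg Q \le t$, $Q \ne 0$, such that $f(z) = P(z)/Q(z)$ for all $z$ in some neighborhood of $0$; in particular $f$ is not transcendental. -/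
/-!
Let `A` be the Taylor polynomial of `f` of degree `2t` and `P / Q` a Padé approximant of type
`(t, t)` to `A`, so that `g = Q f - P` vanishes to order `2t + 1` at `0`. At `z = 1/q` the value
`g (1/q)` is rational with denominator `O(q^(2t))`, by the bound on the denominator of `f (1/q)`,
while `|g (1/q)| = O(q^(-2t-1))`; so `g (1/q) = 0` for all large `q`, and `g` vanishes near `0` by
the identity theorem. Cancelling common factors `z` from `P` and `Q` makes `Q 0 ≠ 0`, and then
`f = P / Q` near `0`.
-/

open Polynomial Filter Topology Asymptotics

theorem exists_pade_approximant {K : Type*} [Field K] (A : K[X]) (m n : ℕ) :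
    ∃ P Q : K[X], P.degree ≤ m ∧ Q.degree ≤ n ∧ Q ≠ 0 ∧ X ^ (m + n + 1) ∣ Q * A - P := by
  let L : degreeLT K (n + 1) →ₗ[K] Fin n → K := LinearMap.pi fun i =>
    (lcoeff K (m + 1 + i)) ∘ₗ LinearMap.mulRight K A ∘ₗ (degreeLT K (n + 1)).subtype
  have hker : LinearMap.ker L ≠ ⊥ := LinearMap.ker_ne_bot_of_finrank_lt <| by
    simp [(degreeLTEquiv K (n + 1)).finrank_eq]
  obtain ⟨⟨Q, hQn⟩, hQker, hQ0⟩ := (Submodule.ne_bot_iff _).mp hker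
  have hQA (i : ℕ) (hi : i < n) : (Q * A).coeff (m + 1 + i) = 0 :=
    congrFun (LinearMap.mem_ker.mp hQker) ⟨i, hi⟩
  refine ⟨PowerSeries.trunc (m + 1) ((Q * A : K[X]) : PowerSeries K), Q, ?_, ?_,
    by simpa using hQ0, ?_⟩
  · exact Order.le_of_lt_succ (PowerSeries.degree_trunc_lt _ _)
  · exact Order.le_of_lt_succ (mem_degreeLT.mp hQn)
  · refine X_pow_dvd_iff.mpr fun d hd => ?_
    rw [coeff_sub, PowerSeries.coeff_trunc, Polynomial.coeff_coe]
    split_ifs with hdm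
    · exact sub_self _
    · obtain ⟨i, rfl⟩ := Nat.exists_eq_add_of_le (not_lt.mp hdm)
      rw [hQA i (by omega), sub_zero]

theorem aeval_eq_mul_aeval_divX {R A : Type*} [CommSemiring R] [CommSemiring A] [Algebra R A]
    {S : R[X]} (hS : S.coeff 0 = 0) (z : A) :
    aeval z S = z * aeval z S.divX := by
  conv_lhs => rw [← X_mul_divX_add S, hS]
  simp

section

variable {𝕜 : Type*} [NontriviallyNormedField 𝕜]

theorem AnalyticAt.isBigO_sub_aeval_taylor [CharZero 𝕜] [CompleteSpace 𝕜] {f : 𝕜 → 𝕜}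
    (hf : AnalyticAt 𝕜 f 0) {n : ℕ} {a : ℕ → ℚ}
    (ha : ∀ k < n, iteratedDeriv k f 0 = a k * k.factorial) :
    (fun z => f z - aeval z (∑ k ∈ Finset.range n, C (a k) * X ^ k)) =O[𝓝 0]
      fun z => z ^ n := by
  obtain ⟨F, hF, hfF⟩ := hf.exists_eventuallyEq_sum_add_pow_mul n
  have htaylor (z : 𝕜) : ∑ i ∈ Finset.range n, (z ^ i / i.factorial) • iteratedDeriv i f 0 =
      aeval z (∑ k ∈ Finset.range n, C (a k) * X ^ k) := by
    simp only [map_sum, map_mul, aeval_C, map_pow, aeval_X, eq_ratCast, smul_eq_mul]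
    refine Finset.sum_congr rfl fun k hk => ?_
    rw [ha k (Finset.mem_range.mp hk)]
    field_simp [Nat.cast_ne_zero.mpr k.factorial_ne_zero]
  refine ((isBigO_refl (fun z : 𝕜 => z ^ n) (𝓝 0)).mul
    (hF.continuousAt.isBigO_one 𝕜)).congr' ?_ (by simp)
  filter_upwards [hfF] with z hz
  rw [hz, ← htaylor, smul_eq_mul]; ring

variable {K : Type*} [Field K] [Algebra K 𝕜]

theorem isBigO_aeval_mul_sub_aeval_of_dvd {f : 𝕜 → 𝕜}
    {A P Q : K[X]} {n : ℕ} (hf : (fun z => f z - aeval z A) =O[𝓝 0] fun z => z ^ n)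
    (hdvd : X ^ n ∣ Q * A - P) :
    (fun z => aeval z Q * f z - aeval z P) =O[𝓝 0] fun z => z ^ n := by
  obtain ⟨R, hR⟩ := hdvd
  have hsplit (z : 𝕜) : aeval z Q * f z - aeval z P =
      aeval z Q * (f z - aeval z A) + z ^ n * aeval z R := by
    have := congrArg (aeval z) hR
    simp only [map_sub, map_mul, map_pow, aeval_X] at this
    linear_combination this
  simp_rw [hsplit]
  refine IsBigO.add ?_ ?_
  · exact (Q.continuousAt_aeval.isBigO_one 𝕜).mul hf |>.congr_right (by simp)
  · exact (isBigO_refl _ _).mul (R.continuousAt_aeval.isBigO_one 𝕜) |>.congr_right (by simp)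

theorem eventually_aeval_divX_mul_eq {f : 𝕜 → 𝕜} (hf : AnalyticAt 𝕜 f 0) {P Q : K[X]}
    (hQ0 : Q.coeff 0 = 0) (h : ∀ᶠ z in 𝓝 0, aeval z Q * f z = aeval z P) :
    ∀ᶠ z in 𝓝 0, aeval z Q.divX * f z = aeval z P.divX := by
  have hP0 : P.coeff 0 = 0 := by
    have h0 := h.self_of_nhds
    rw [← coeff_zero_eq_aeval_zero', ← coeff_zero_eq_aeval_zero', hQ0, map_zero, zero_mul,
      eq_comm, map_eq_zero] at h0
    exact h0
  have hg : AnalyticAt 𝕜 (fun z => aeval z Q.divX * f z - aeval z P.divX) 0 :=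
    ((analyticAt_id.aeval_polynomial _).mul hf).sub (analyticAt_id.aeval_polynomial _)
  have hpunct : ∀ᶠ z in 𝓝[≠] 0, aeval z Q.divX * f z - aeval z P.divX = 0 := by
    filter_upwards [nhdsWithin_le_nhds h, self_mem_nhdsWithin] with z hz hz0
    rw [aeval_eq_mul_aeval_divX hQ0, aeval_eq_mul_aeval_divX hP0, mul_assoc] at hz
    exact sub_eq_zero.mpr (mul_left_cancel₀ hz0 hz)
  simpa [sub_eq_zero] using hg.frequently_zero_iff_eventually_zero.mp hpunct.frequently

theorem eventually_eq_div_of_coeff_zero_ne_zero {f : 𝕜 → 𝕜} {P Q : K[X]} (hQ0 : Q.coeff 0 ≠ 0)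
    (h : ∀ᶠ z in 𝓝 0, aeval z Q * f z = aeval z P) :
    ∀ᶠ z in 𝓝 0, f z = aeval z P / aeval z Q := by
  have hQz : ∀ᶠ z in 𝓝 (0 : 𝕜), aeval z Q ≠ 0 :=
    Q.continuousAt_aeval.eventually_ne (by simpa [← coeff_zero_eq_aeval_zero'] using hQ0)
  filter_upwards [h, hQz] with z hz hQz
  rw [eq_div_iff hQz, mul_comm, hz]

theorem exists_eventually_eq_div_of_eventually_mul_eq {f : 𝕜 → 𝕜} (hf : AnalyticAt 𝕜 f 0)
    {P Q : K[X]} (hQ : Q ≠ 0) (h : ∀ᶠ z in 𝓝 0, aeval z Q * f z = aeval z P) :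
    ∃ P' Q' : K[X], P'.degree ≤ P.degree ∧ Q'.degree ≤ Q.degree ∧ Q' ≠ 0 ∧
      ∀ᶠ z in 𝓝 0, f z = aeval z P' / aeval z Q' := by
  induction hn : Q.natDegree using Nat.strong_induction_on generalizing P Q with
  | _ n ih =>
  by_cases hQ0 : Q.coeff 0 = 0
  · have hdivX : Q.divX ≠ 0 := by
      rw [Ne, divX_eq_zero_iff, hQ0, C_0]; exact hQ
    have hdeg : Q.divX.natDegree < n := by
      rw [← hn, natDegree_divX_eq_natDegree_tsub_one]
      refine Nat.sub_lt (Nat.pos_of_ne_zero fun h0 => hdivX ?_) one_pos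
      rw [divX_eq_zero_iff, ← eq_C_of_natDegree_eq_zero h0]
    obtain ⟨P', Q', hP', hQ', hQ'0, hf'⟩ :=
      ih _ hdeg hdivX (eventually_aeval_divX_mul_eq hf hQ0 h) rfl
    refine ⟨P', Q', hP'.trans ?_, hQ'.trans (degree_divX_lt hQ).le, hQ'0, hf'⟩
    rcases eq_or_ne P 0 with rfl | hP
    · simp
    · exact (degree_divX_lt hP).le
  · exact ⟨P, Q, le_rfl, le_rfl, hQ, eventually_eq_div_of_coeff_zero_ne_zero hQ0 h⟩

end

theorem AnalyticAt.eventually_eq_zero_of_eventually_apply_inv_natCast_eq_zero {𝕜 E : Type*}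
    [RCLike 𝕜] [NormedAddCommGroup E] [NormedSpace 𝕜 E] {g : 𝕜 → E} (hg : AnalyticAt 𝕜 g 0)
    (h : ∀ᶠ q : ℕ in atTop, g (q : 𝕜)⁻¹ = 0) :
    ∀ᶠ z in 𝓝 0, g z = 0 := by
  have htendsto : Tendsto (fun q : ℕ => (q : 𝕜)⁻¹) atTop (𝓝[≠] 0) :=
    tendsto_nhdsWithin_iff.mpr ⟨tendsto_inv_atTop_nhds_zero_nat,
      (eventually_ne_atTop 0).mono fun q hq => by simpa using hq⟩
  exact hg.frequently_zero_iff_eventually_zero.mp (htendsto.frequently h.frequently)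

theorem Subring.mul_pow_mul_eval_inv_mem {K : Type*} [Field K] (R : Subring K) {S : K[X]}
    {t : ℕ} (hS : S.natDegree ≤ t) {d : K} (hd : ∀ k, d * S.coeff k ∈ R) {x : K} (hx : x ∈ R)
    (hx0 : x ≠ 0) : d * x ^ t * S.eval x⁻¹ ∈ R := by
  rw [eval_eq_sum_range' (Nat.lt_succ_of_le hS), Finset.mul_sum]
  refine R.sum_mem fun i hi => ?_
  have hit : i ≤ t := Nat.lt_succ_iff.mp (Finset.mem_range.mp hi)
  have : d * x ^ t * (S.coeff i * x⁻¹ ^ i) = d * S.coeff i * x ^ (t - i) := by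
    rw [pow_sub₀ _ hx0 hit, inv_pow]; ring
  rw [this]
  exact R.mul_mem (hd i) (R.pow_mem hx _)

theorem Polynomial.exists_nat_mul_coeff_mem_bot (S : ℚ[X]) :
    ∃ d : ℕ, 0 < d ∧ ∀ k, (d : ℚ) * S.coeff k ∈ (⊥ : Subring ℚ) := by
  refine ⟨∏ k ∈ S.support, (S.coeff k).den, Finset.prod_pos fun k _ => (S.coeff k).pos,
    fun k => ?_⟩
  by_cases hk : k ∈ S.support
  · obtain ⟨e, he⟩ := Finset.dvd_prod_of_mem (fun k => (S.coeff k).den) hk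
    refine Subring.mem_bot.mpr ⟨e * (S.coeff k).num, ?_⟩
    rw [he, Nat.cast_mul, mul_comm ((S.coeff k).den : ℚ), mul_assoc, Rat.den_mul_eq_num]
    push_cast; ring
  · simp [notMem_support_iff.mp hk]

def HasDenominatorLE (w : ℂ) (B : ℝ) : Prop :=
  ∃ N : ℕ, 0 < N ∧ (N : ℝ) ≤ B ∧ ∃ m : ℤ, (N : ℂ) * w = m

theorem eventually_exists_apply_inv_natCast_eq_ratCast {f : ℂ → ℂ} {Ω : Set ℂ} (hΩ : Ω ∈ 𝓝 0)
    (hratval : ∀ r : ℚ, (r : ℂ) ∈ Ω → ∃ s : ℚ, f r = s) {B : ℝ} {q₀ t : ℕ}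
    (hden : ∀ r : ℚ, (r : ℂ) ∈ Ω → q₀ ≤ r.den →
      ∀ s : ℚ, f r = s → (s.den : ℝ) ≤ B * (r.den : ℝ) ^ t) :
    ∀ᶠ q : ℕ in atTop, ∃ s : ℚ, f (q : ℂ)⁻¹ = s ∧ (s.den : ℝ) ≤ B * q ^ t := by
  filter_upwards [tendsto_inv_atTop_nhds_zero_nat.eventually hΩ,
    eventually_ge_atTop (max q₀ 1)] with q hqΩ hq
  have hcast : (((q : ℚ)⁻¹ : ℚ) : ℂ) = (q : ℂ)⁻¹ := by push_cast; rfl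
  have hqden : ((q : ℚ)⁻¹).den = q := Rat.inv_natCast_den_of_pos (by omega)
  obtain ⟨s, hs⟩ := hratval _ (hcast ▸ hqΩ)
  refine ⟨s, hcast ▸ hs, ?_⟩
  simpa [hqden] using hden _ (hcast ▸ hqΩ) (by omega) s hs

theorem exists_eventually_hasDenominatorLE_aeval_mul_sub_aeval {f : ℂ → ℂ} {P Q : ℚ[X]}
    {t : ℕ} {B : ℝ} (hP : P.natDegree ≤ t) (hQ : Q.natDegree ≤ t)
    (hval : ∀ᶠ q : ℕ in atTop, ∃ s : ℚ, f (q : ℂ)⁻¹ = s ∧ (s.den : ℝ) ≤ B * q ^ t) :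
    ∃ K : ℝ, ∀ᶠ q : ℕ in atTop, HasDenominatorLE
      (aeval (q : ℂ)⁻¹ Q * f (q : ℂ)⁻¹ - aeval (q : ℂ)⁻¹ P) (K * q ^ (2 * t)) := by
  obtain ⟨dP, hdP, hPint⟩ := P.exists_nat_mul_coeff_mem_bot
  obtain ⟨dQ, hdQ, hQint⟩ := Q.exists_nat_mul_coeff_mem_bot
  refine ⟨dP * dQ * B, ?_⟩
  filter_upwards [hval, eventually_ne_atTop 0] with q ⟨s, hs, hsden⟩ hq0
  refine ⟨dP * dQ * q ^ t * s.den, by positivity, ?_, ?_⟩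
  · push_cast
    calc (dP * dQ * q ^ t * s.den : ℝ) ≤ dP * dQ * q ^ t * (B * q ^ t) := by gcongr
      _ = dP * dQ * B * q ^ (2 * t) := by ring
  · have hQm := (⊥ : Subring ℚ).mul_pow_mul_eval_inv_mem hQ hQint (natCast_mem _ q)
      (by exact_mod_cast hq0)
    have hPm := (⊥ : Subring ℚ).mul_pow_mul_eval_inv_mem hP hPint (natCast_mem _ q)
      (by exact_mod_cast hq0)
    have hsm : (s.den : ℚ) * s ∈ (⊥ : Subring ℚ) :=
      Subring.mem_bot.mpr ⟨s.num, (Rat.den_mul_eq_num s).symm⟩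
    obtain ⟨m, hm⟩ := Subring.mem_bot.mp <| sub_mem
      (mul_mem (mul_mem (natCast_mem _ dP) hQm) hsm)
      (mul_mem (mul_mem (natCast_mem _ dQ) (natCast_mem _ s.den)) hPm)
    refine ⟨m, ?_⟩
    have hcast (S : ℚ[X]) : aeval (q : ℂ)⁻¹ S = ((S.eval (q : ℚ)⁻¹ : ℚ) : ℂ) := by
      simpa using aeval_algebraMap_apply_eq_algebraMap_eval (A := ℂ) (q : ℚ)⁻¹ S
    rw [hcast, hcast, hs, ← Rat.cast_intCast, hm]
    push_cast
    ring

theorem eventually_apply_inv_natCast_eq_zero_of_isBigO {g : ℂ → ℂ} {n : ℕ}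
    (hg : g =O[𝓝 0] fun z => z ^ (n + 1)) {K : ℝ}
    (hint : ∀ᶠ q : ℕ in atTop, HasDenominatorLE (g (q : ℂ)⁻¹) (K * q ^ n)) :
    ∀ᶠ q : ℕ in atTop, g (q : ℂ)⁻¹ = 0 := by
  obtain ⟨M, -, hgM⟩ := hg.exists_pos
  have hbound := (tendsto_inv_atTop_nhds_zero_nat (𝕜 := ℂ)).eventually hgM.bound
  obtain ⟨q₁, hq₁⟩ := exists_nat_gt (K * M)
  filter_upwards [hbound, hint, eventually_ge_atTop q₁, eventually_ne_atTop 0]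
    with q hgq ⟨N, hN, hNK, m, hm⟩ hq₁q hq0
  have hq : (0 : ℝ) < q := by positivity
  have hm_lt : |(m : ℝ)| < 1 := calc
    |(m : ℝ)| = N * ‖g (q : ℂ)⁻¹‖ := by
      rw [← Complex.norm_intCast, ← hm, norm_mul, Complex.norm_natCast]
    _ ≤ K * q ^ n * (M * ((q : ℝ) ^ (n + 1))⁻¹) :=
      mul_le_mul hNK (hgq.trans_eq (by simp)) (norm_nonneg _) ((Nat.cast_nonneg _).trans hNK)
    _ = K * M / q := by field_simp; ring
    _ < 1 := by rw [div_lt_one hq]; exact hq₁.trans_le (by exact_mod_cast hq₁q)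
  have hm0 : m = 0 := Int.abs_lt_one_iff.mp (by exact_mod_cast hm_lt)
  simpa [hm0, hN.ne'] using hm

theorem rational_function_of_small_denominators_general
    (t : ℕ) (Ω : Set ℂ) (hΩ : IsOpen Ω) (h0 : (0 : ℂ) ∈ Ω)
    (f : ℂ → ℂ) (hf : AnalyticOnNhd ℂ f Ω)
    (hcoeff : ∀ k : ℕ, k ≤ 2 * t → ∃ a : ℚ, iteratedDeriv k f 0 = (a : ℂ) * (Nat.factorial k))
    (hratval : ∀ r : ℚ, (r : ℂ) ∈ Ω → ∃ s : ℚ, f (r : ℂ) = (s : ℂ))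
    (hden : ∃ C : ℝ, 0 < C ∧ ∃ q₀ : ℕ, ∀ r : ℚ, (r : ℂ) ∈ Ω → q₀ ≤ r.den →
      ∀ s : ℚ, f (r : ℂ) = (s : ℂ) → (s.den : ℝ) ≤ C * (r.den : ℝ) ^ (t : ℕ)) :
    ∃ P Q : Polynomial ℚ, P.degree ≤ (t : ℕ) ∧ Q.degree ≤ (t : ℕ) ∧ Q ≠ 0 ∧
      ∀ᶠ z in nhds (0 : ℂ), f z =
        Polynomial.aeval z P / Polynomial.aeval z Q := by
  obtain ⟨B, -, q₀, hden⟩ := hden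
  choose! a ha using hcoeff
  have hf0 : AnalyticAt ℂ f 0 := hf 0 h0
  obtain ⟨P, Q, hP, hQ, hQ0, hdvd⟩ :=
    exists_pade_approximant (∑ k ∈ Finset.range (2 * t + 1), C (a k) * X ^ k) t t
  rw [← two_mul] at hdvd
  have hO := isBigO_aeval_mul_sub_aeval_of_dvd
    (hf0.isBigO_sub_aeval_taylor fun k hk => ha k (by omega)) hdvd
  obtain ⟨K, hint⟩ := exists_eventually_hasDenominatorLE_aeval_mul_sub_aeval
    (natDegree_le_of_degree_le hP) (natDegree_le_of_degree_le hQ)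
    (eventually_exists_apply_inv_natCast_eq_ratCast (hΩ.mem_nhds h0) hratval hden)
  have hg : AnalyticAt ℂ (fun z => aeval z Q * f z - aeval z P) 0 :=
    ((analyticAt_id.aeval_polynomial Q).mul hf0).sub (analyticAt_id.aeval_polynomial P)
  have hzero := hg.eventually_eq_zero_of_eventually_apply_inv_natCast_eq_zero
    (eventually_apply_inv_natCast_eq_zero_of_isBigO hO hint)
  obtain ⟨P', Q', hP', hQ', hQ'0, hPQ⟩ := exists_eventually_eq_div_of_eventually_mul_eq hf0 hQ0
    (hzero.mono fun z hz => sub_eq_zero.mp hz)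
  exact ⟨P', Q', hP'.trans hP, hQ'.trans hQ, hQ'0, hPQ⟩

/-- Let `t` be a positive integer, `Ω ⊆ ℂ` an open neighborhood of the origin,
and `f` analytic on `Ω` with Taylor coefficients `aₖ = f⁽ᵏ⁾(0)/k!` rational for all `0 ≤ k ≤ 2t`.
Suppose `f(ℚ ∩ Ω) ⊆ ℚ` and there are `C > 0` and an integer `q₀` with `den f(p/q) ≤ C * q^t` for
all rationals `p/q ∈ Ω` in lowest terms with `q ≥ q₀`. Then there are `P, Q ∈ ℚ[z]` of degree at
most `t`, with `Q ≠ 0`, such that `f(z) = P(z)/Q(z)` on some neighborhood of `0`; in particular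
`f` is not transcendental. -/
theorem rational_function_of_small_denominators
    (t : ℕ) (ht : 0 < t) (Ω : Set ℂ) (hΩ : IsOpen Ω) (h0 : (0 : ℂ) ∈ Ω)
    (f : ℂ → ℂ) (hf : AnalyticOnNhd ℂ f Ω)
    (hcoeff : ∀ k : ℕ, k ≤ 2 * t → ∃ a : ℚ, iteratedDeriv k f 0 = (a : ℂ) * (Nat.factorial k))
    (hratval : ∀ r : ℚ, (r : ℂ) ∈ Ω → ∃ s : ℚ, f (r : ℂ) = (s : ℂ))
    (hden : ∃ C : ℝ, 0 < C ∧ ∃ q₀ : ℕ, ∀ r : ℚ, (r : ℂ) ∈ Ω → q₀ ≤ r.den →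
      ∀ s : ℚ, f (r : ℂ) = (s : ℂ) → (s.den : ℝ) ≤ C * (r.den : ℝ) ^ (t : ℕ)) :
    ∃ P Q : Polynomial ℚ, P.degree ≤ (t : ℕ) ∧ Q.degree ≤ (t : ℕ) ∧ Q ≠ 0 ∧
      ∀ᶠ z in nhds (0 : ℂ), f z =
        Polynomial.aeval z P / Polynomial.aeval z Q :=
  rational_function_of_small_denominators_general t Ω hΩ h0 f hf hcoeff hratval hden
end

section
/- Let $t$ be a positive integer, let $\Omega \subseteq \mathbb{C}$ be an open neighborhood of the origin, and let $f$ be analytic on $\Omega$ with $f(0) = 0$ and Taylor coefficients $a_k$ at $0$ satisfying $a_k \in \mathbb{Q}$ for all $0 \le k \le 2t$. Suppose $f(\mathbb{Q} \cap \Omega) \subseteq \mathbb{Q}$ and there exist a constant $C > 0$ and an integer $q_0$ such that $\operatorname{den} f(p/q) \le C\, q^{t}$ for all rational numbers $p/q \in \Omega$ in lowest terms with $q \ge q_0$. Then there exist polynomials $P, Q \in \mathbb{Q}[z]$ with $\deg P \le t$, $\deg Q \le t$, $Q \ne 0$, and a positive integer $M_1$ such that for every integer $M \ge M_1$ one has $Q(1/M)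 \ne 0$ and $f(1/M) = P(1/M)/Q(1/M)$. -/
/-!
Padé approximation: since the Taylor coefficients `a₀, …, a₂ₜ` are rational, there are
`P, Q ∈ ℤ[X]` of degree at most `t`, `Q ≠ 0`, with `Q(z) f(z) - P(z) = O(z ^ (2t + 1))` at `0`.
At `z = 1/M` this difference is a rational number whose denominator divides
`M ^ t * den f(1/M) ≤ C M ^ (2t)`, while its size is `O(M ^ (-2t-1))`; for large `M` it is
therefore smaller than the reciprocal of its denominator, hence zero.
-/

open Polynomial Filter

namespace Polynomial

variable {R : Type*} [CommRing R]

theorem exists_pade [StrongRankCondition R] (S : R[X]) (m n : ℕ) :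
    ∃ P Q : R[X], P.natDegree ≤ m ∧ Q.natDegree ≤ n ∧ Q ≠ 0 ∧ X ^ (m + n + 1) ∣ Q * S - P := by
  let L : (Fin (n + 1) → R) →ₗ[R] Fin n → R := LinearMap.pi fun i =>
    lcoeff R (m + 1 + i) ∘ₗ LinearMap.mulRight R S ∘ₗ (degreeLT R (n + 1)).subtype ∘ₗ
      (degreeLTEquiv R (n + 1)).symm.toLinearMap
  -- `n + 1` free coefficients of `Q` against `n` linear conditions
  have hL : LinearMap.ker L ≠ ⊥ := fun h => by
    simpa using LinearMap.finrank_le_finrank_of_injective (LinearMap.ker_eq_bot.mp h)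
  obtain ⟨v, hv, hv0⟩ := (Submodule.ne_bot_iff _).mp hL
  set Q : R[X] := ((degreeLTEquiv R (n + 1)).symm v : R[X])
  have hQS : ∀ i < n, (Q * S).coeff (m + 1 + i) = 0 := fun i hi => congrFun hv ⟨i, hi⟩
  refine ⟨PowerSeries.trunc (m + 1) ((Q * S : R[X]) : PowerSeries R), Q,
    Nat.lt_succ_iff.mp (PowerSeries.natDegree_trunc_lt _ _), ?_, by simpa [Q] using hv0,
    X_pow_dvd_iff.mpr fun d hd => ?_⟩
  · exact natDegree_le_iff_degree_le.mpr <| mem_degreeLE.mp <|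
      (degreeLT_succ_eq_degreeLE (R := R) ▸ ((degreeLTEquiv R (n + 1)).symm v).2)
  · rw [coeff_sub, PowerSeries.coeff_trunc, Polynomial.coeff_coe]
    split_ifs with h
    · exact sub_self _
    · obtain ⟨i, rfl⟩ := Nat.exists_eq_add_of_le (not_lt.mp h)
      simpa using hQS i (by omega)

theorem exists_pade_of_isFractionRing [IsDomain R] {K : Type*} [Field K] [Algebra R K]
    [IsFractionRing R K] (S : K[X]) (m n : ℕ) :
    ∃ P Q : R[X], P.natDegree ≤ m ∧ Q.natDegree ≤ n ∧ Q ≠ 0 ∧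
      X ^ (m + n + 1) ∣ Q.map (algebraMap R K) * S - P.map (algebraMap R K) := by
  obtain ⟨b, hb, hbS⟩ := IsLocalization.integerNormalization_spec (nonZeroDivisors R) S
  obtain ⟨P, Q, hP, hQ, hQ0, hdvd⟩ :=
    exists_pade (IsLocalization.integerNormalization (nonZeroDivisors R) S) m n
  refine ⟨P, b • Q, hP, (natDegree_smul_le b Q).trans hQ,
    smul_ne_zero (nonZeroDivisors.ne_zero hb) hQ0, ?_⟩
  simpa [Polynomial.map_sub, Polynomial.map_mul, hbS, Polynomial.map_smul, Algebra.smul_def,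
    mul_assoc, mul_left_comm] using Polynomial.map_dvd (algebraMap R K) hdvd

theorem pow_mul_aeval_inv {K : Type*} [Field K] [Algebra R K] {Q : R[X]} {N : ℕ}
    (hQ : Q.natDegree ≤ N) {x : K} (hx : x ≠ 0) : x ^ N * aeval x⁻¹ Q = aeval x (reflect N Q) := by
  let := invertibleOfNonzero (inv_ne_zero hx)
  have := eval₂_reflect_mul_pow (algebraMap R K) x⁻¹ N Q hQ
  rw [invOf_eq_inv, inv_inv] at this
  rw [aeval_def, aeval_def, ← this, mul_comm, mul_assoc, ← mul_pow, inv_mul_cancel₀ hx, one_pow,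
    mul_one]

theorem eventually_aeval_inv_natCast_ne_zero {K : Type*} [Field K] [CharZero K] {Q : ℤ[X]}
    (hQ : Q ≠ 0) : ∀ᶠ M : ℕ in atTop, aeval (M : K)⁻¹ Q ≠ 0 := by
  have hroots : {x : K | aeval x Q = 0}.Finite := by
    simpa [aeval_def, IsRoot, eval_map] using finite_setOfPred_isRoot
      ((Polynomial.map_ne_zero_iff (algebraMap ℤ K).injective_int).mpr hQ)
  rw [← Nat.cofinite_eq_atTop]
  exact (inv_injective.comp Nat.cast_injective).tendsto_cofinite.eventually
    hroots.compl_mem_cofinite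

theorem aeval_inv_mul_eq_of_abs_lt {P Q : ℤ[X]} {t M : ℕ} (hP : P.natDegree ≤ t)
    (hQ : Q.natDegree ≤ t) (hM : M ≠ 0) {s : ℚ}
    (h : |aeval (M : ℚ)⁻¹ Q * s - aeval (M : ℚ)⁻¹ P| * (M ^ t * s.den) < 1) :
    aeval (M : ℚ)⁻¹ Q * s = aeval (M : ℚ)⁻¹ P := by
  have hM' : (M : ℚ) ≠ 0 := Nat.cast_ne_zero.mpr hM
  obtain ⟨k, hk⟩ : ∃ k : ℤ,
      (aeval (M : ℚ)⁻¹ Q * s - aeval (M : ℚ)⁻¹ P) * (M ^ t * s.den) = k := by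
    refine ⟨(reflect t Q).eval (M : ℤ) * s.num - (reflect t P).eval (M : ℤ) * s.den, ?_⟩
    have hQ' := pow_mul_aeval_inv hQ hM'
    have hP' := pow_mul_aeval_inv hP hM'
    rw [aeval_def (M : ℚ), eval₂_at_natCast, eq_intCast] at hQ' hP'
    push_cast
    linear_combination (s * s.den) * hQ' - (s.den : ℚ) * hP' +
      (((reflect t Q).eval (M : ℤ) : ℤ) : ℚ) * Rat.mul_den_eq_num s
  have hk0 : k = 0 := by
    rw [← Int.abs_lt_one_iff, ← Int.cast_lt (R := ℚ), Int.cast_abs, ← hk, abs_mul,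
      abs_of_nonneg (by positivity : (0 : ℚ) ≤ M ^ t * s.den), Int.cast_one]
    exact h
  rw [hk0, Int.cast_zero, mul_eq_zero, sub_eq_zero] at hk
  exact hk.resolve_right (by positivity)

end Polynomial

theorem AnalyticAt.exists_eq_aeval_add_pow_mul {𝕜 : Type*} [NontriviallyNormedField 𝕜]
    [CharZero 𝕜] [CompleteSpace 𝕜] {f : 𝕜 → 𝕜} (hf : AnalyticAt 𝕜 f 0) (n : ℕ)
    (hcoeff : ∀ k < n, ∃ a : ℚ, iteratedDeriv k f 0 = a * k.factorial) :
    ∃ S : ℚ[X], ∃ F : 𝕜 → 𝕜, ContinuousAt F 0 ∧ ∀ z, f z = aeval z S + z ^ n * F z := by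
  choose a ha using hcoeff
  obtain ⟨F, hF, hfF⟩ := hf.exists_eq_sum_add_pow_mul n
  refine ⟨∑ k : Fin n, C (a k k.2) * X ^ (k : ℕ), F, hF.continuousAt, fun z => ?_⟩
  rw [hfF z, Finset.sum_range fun i => (z ^ i / i.factorial) • iteratedDeriv i f 0, smul_eq_mul]
  simp only [map_sum, map_mul, aeval_C, aeval_X_pow, eq_ratCast]
  congr 1
  exact Finset.sum_congr rfl fun i _ => by
    rw [ha i i.2, smul_eq_mul]; field_simp [Nat.factorial_ne_zero]

theorem eventually_aeval_inv_mul_eq_aeval_inv {f G : ℂ → ℂ} {P Q : ℤ[X]} {t : ℕ} {C : ℝ}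
    (hP : P.natDegree ≤ t) (hQ : Q.natDegree ≤ t) (hG : ContinuousAt G 0)
    (hPQ : ∀ z, aeval z Q * f z - aeval z P = z ^ (2 * t + 1) * G z)
    (hvals : ∀ᶠ M : ℕ in atTop, ∃ s : ℚ, f (M : ℂ)⁻¹ = s ∧ (s.den : ℝ) ≤ C * M ^ t) :
    ∀ᶠ M : ℕ in atTop, aeval (M : ℂ)⁻¹ Q * f (M : ℂ)⁻¹ = aeval (M : ℂ)⁻¹ P := by
  set c := ‖G 0‖ + 1
  have hGc : ∀ᶠ M : ℕ in atTop, ‖G (M : ℂ)⁻¹‖ ≤ c :=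
    ((hG.tendsto.comp tendsto_inv_atTop_nhds_zero_nat).norm.eventually
      (gt_mem_nhds (lt_add_one _))).mono fun _ => le_of_lt
  filter_upwards [hvals, hGc, eventually_gt_atTop ⌈C * c⌉₊] with M ⟨s, hfs, hs⟩ hGM hM
  have hM0 : M ≠ 0 := by omega
  have hcast : ∀ R : ℤ[X], aeval (M : ℂ)⁻¹ R = (aeval (M : ℚ)⁻¹ R : ℚ) := fun R => by
    simpa using aeval_algebraMap_apply (B := ℂ) (M : ℚ)⁻¹ R
  set x : ℚ := aeval (M : ℚ)⁻¹ Q * s - aeval (M : ℚ)⁻¹ P with hxdef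
  have hx : (x : ℂ) = (M : ℂ)⁻¹ ^ (2 * t + 1) * G (M : ℂ)⁻¹ := by
    rw [← hPQ, hfs, hcast, hcast, hxdef]
    push_cast
    rfl
  suffices h : aeval (M : ℚ)⁻¹ Q * s = aeval (M : ℚ)⁻¹ P by
    rw [hfs, hcast, hcast, ← h]
    push_cast
    rfl
  refine aeval_inv_mul_eq_of_abs_lt hP hQ hM0 ?_
  have hxM : |(x : ℝ)| ≤ (M : ℝ)⁻¹ ^ (2 * t + 1) * c := by
    rw [← Complex.norm_ratCast, hx, norm_mul, norm_pow, norm_inv, Complex.norm_natCast]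
    gcongr
  have hCc : C * c < M := Nat.lt_of_ceil_lt hM
  have hMpos : (0 : ℝ) < M := by positivity
  rw [← hxdef, ← Rat.cast_lt (K := ℝ)]
  push_cast
  calc _ ≤ (M : ℝ)⁻¹ ^ (2 * t + 1) * c * (M ^ t * (C * M ^ t)) := by gcongr
    _ = C * c / M := by rw [inv_pow]; field_simp; ring
    _ < 1 := (div_lt_one hMpos).mpr hCc

theorem agrees_with_rational_function_at_reciprocals_general
    (t : ℕ) (Ω : Set ℂ) (hΩ : IsOpen Ω) (h0 : (0 : ℂ) ∈ Ω)
    (f : ℂ → ℂ) (hf : AnalyticOnNhd ℂ f Ω)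
    (hcoeff : ∀ k : ℕ, k ≤ 2 * t → ∃ a : ℚ, iteratedDeriv k f 0 = (a : ℂ) * (Nat.factorial k))
    (hratval : ∀ r : ℚ, (r : ℂ) ∈ Ω → ∃ s : ℚ, f (r : ℂ) = (s : ℂ))
    (hden : ∃ C : ℝ, 0 < C ∧ ∃ q₀ : ℕ, ∀ r : ℚ, (r : ℂ) ∈ Ω → q₀ ≤ r.den →
      ∀ s : ℚ, f (r : ℂ) = (s : ℂ) → (s.den : ℝ) ≤ C * (r.den : ℝ) ^ t) :
    ∃ P Q : Polynomial ℚ, P.degree ≤ (t : ℕ) ∧ Q.degree ≤ (t : ℕ) ∧ Q ≠ 0 ∧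
      ∃ M₁ : ℕ, 0 < M₁ ∧ ∀ M : ℕ, M₁ ≤ M →
        Polynomial.aeval ((1 : ℂ) / M) Q ≠ 0 ∧
        f ((1 : ℂ) / M) =
          Polynomial.aeval ((1 : ℂ) / M) P / Polynomial.aeval ((1 : ℂ) / M) Q := by
  obtain ⟨C, -, q₀, hq⟩ := hden
  obtain ⟨S, F, hF, hfS⟩ := (hf 0 h0).exists_eq_aeval_add_pow_mul (2 * t + 1)
    fun k hk => hcoeff k (Nat.lt_succ_iff.mp hk)
  obtain ⟨P, Q, hP, hQ, hQ0, W, hW⟩ := exists_pade_of_isFractionRing (R := ℤ) S t t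
  have hPQ : ∀ z, aeval z Q * f z - aeval z P =
      z ^ (2 * t + 1) * (aeval z W + aeval z Q * F z) := fun z => by
    have h := congrArg (aeval z) hW
    simp only [map_sub, map_mul, map_pow, aeval_X, aeval_map_algebraMap, ← two_mul] at h
    rw [hfS]
    linear_combination h
  have hvals : ∀ᶠ M : ℕ in atTop, ∃ s : ℚ, f (M : ℂ)⁻¹ = s ∧ (s.den : ℝ) ≤ C * M ^ t := by
    filter_upwards [tendsto_inv_atTop_nhds_zero_nat.eventually_mem (hΩ.mem_nhds h0),
      eventually_ge_atTop (max q₀ 1)] with M hMΩ hM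
    have hMΩ' : (((M : ℚ)⁻¹ : ℚ) : ℂ) ∈ Ω := by simpa using hMΩ
    have hMden : ((M : ℚ)⁻¹).den = M := Rat.inv_natCast_den_of_pos (by omega)
    obtain ⟨s, hs⟩ := hratval _ hMΩ'
    exact ⟨s, by simpa using hs, by simpa [hMden] using hq _ hMΩ' (by omega) s hs⟩
  have hcont : ContinuousAt (fun z => aeval z W + aeval z Q * F z) 0 := by fun_prop
  obtain ⟨M₁, hM₁⟩ := eventually_atTop.mp <|
    (eventually_aeval_inv_natCast_ne_zero (K := ℂ) hQ0).and <|
      eventually_aeval_inv_mul_eq_aeval_inv hP hQ hcont hPQ hvals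
  refine ⟨P.map (algebraMap ℤ ℚ), Q.map (algebraMap ℤ ℚ),
    degree_map_le.trans (natDegree_le_iff_degree_le.mp hP),
    degree_map_le.trans (natDegree_le_iff_degree_le.mp hQ),
    (Polynomial.map_ne_zero_iff (algebraMap ℤ ℚ).injective_int).mpr hQ0, M₁ + 1, M₁.succ_pos,
    fun M hM => ?_⟩
  obtain ⟨hQM, hPQM⟩ := hM₁ M (by omega)
  rw [one_div, aeval_map_algebraMap, aeval_map_algebraMap, eq_div_iff hQM, mul_comm]
  exact ⟨hQM, hPQM⟩

/-- Let `t` be a positive integer, `Ω ⊆ ℂ` an open neighborhood of the origin,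
and `f` analytic on `Ω` with `f(0) = 0` and Taylor coefficients `aₖ = f⁽ᵏ⁾(0)/k!` rational for
all `0 ≤ k ≤ 2t`. Suppose `f(ℚ ∩ Ω) ⊆ ℚ` and there are `C > 0` and an integer `q₀` with
`den f(p/q) ≤ C * q^t` for all rationals `p/q ∈ Ω` in lowest terms with `q ≥ q₀`. Then there
exist `P, Q ∈ ℚ[z]` of degree at most `t` with `Q ≠ 0`, and a positive integer `M₁`, such that
for every integer `M ≥ M₁` one has `Q(1/M) ≠ 0` and `f(1/M) = P(1/M)/Q(1/M)`. -/
theorem agrees_with_rational_function_at_reciprocals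
    (t : ℕ) (ht : 0 < t) (Ω : Set ℂ) (hΩ : IsOpen Ω) (h0 : (0 : ℂ) ∈ Ω)
    (f : ℂ → ℂ) (hf : AnalyticOnNhd ℂ f Ω) (hf0 : f 0 = 0)
    (hcoeff : ∀ k : ℕ, k ≤ 2 * t → ∃ a : ℚ, iteratedDeriv k f 0 = (a : ℂ) * (Nat.factorial k))
    (hratval : ∀ r : ℚ, (r : ℂ) ∈ Ω → ∃ s : ℚ, f (r : ℂ) = (s : ℂ))
    (hden : ∃ C : ℝ, 0 < C ∧ ∃ q₀ : ℕ, ∀ r : ℚ, (r : ℂ) ∈ Ω → q₀ ≤ r.den →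
      ∀ s : ℚ, f (r : ℂ) = (s : ℂ) → (s.den : ℝ) ≤ C * (r.den : ℝ) ^ t) :
    ∃ P Q : Polynomial ℚ, P.degree ≤ (t : ℕ) ∧ Q.degree ≤ (t : ℕ) ∧ Q ≠ 0 ∧
      ∃ M₁ : ℕ, 0 < M₁ ∧ ∀ M : ℕ, M₁ ≤ M →
        Polynomial.aeval ((1 : ℂ) / M) Q ≠ 0 ∧
        f ((1 : ℂ) / M) =
          Polynomial.aeval ((1 : ℂ) / M) P / Polynomial.aeval ((1 : ℂ) / M) Q :=
  agrees_with_rational_function_at_reciprocals_general t Ω hΩ h0 f hf hcoeff hratval hden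
end
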